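/- arXiv:2405.15545 — 2 statements merged into one kernel-verified Lean document; each statement's English description precedes it below -/
import Mathlib

section
/- Suppose 0 < τ_1 ≤ ... ≤ τ_n, let j_B ∈ [n], fix k > j_B and S ≥ 0, and assume τ_i ≥ B for all i with j_B < i ≤ k, where B ≥ (S + j_B)/(∑_{i=1}^{j_B} 1/τ_i). Then (S + j_B)/(∑_{i=1}^{j_B} 1/τ_i) ≤ (S + k)/(∑_{i=1}^{k} 1/τ_i). -/
/-!
Adding the workers `jB < i ≤ k` adds `k - jB` to the numerator and `E = ∑ 1 / τ i ≤ (k - jB) / B`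
to the denominator. The new ratio is a mediant of the old ratio `r ≤ B` and `(k - jB) / E ≥ B`,
so it is at least `r`.
-/

open Finset

theorem div_le_add_div_add_of_mul_le {α : Type*} [Field α] [LinearOrder α] [IsStrictOrderedRing α]
    {a m d e b : α} (hd : 0 < d) (he : 0 ≤ e) (hm : 0 ≤ m) (hab : a / d ≤ b) (hbe : b * e ≤ m) :
    a / d ≤ (a + m) / (d + e) := by
  have had : a ≤ b * d := (div_le_iff₀ hd).mp hab
  have hae : a * e ≤ m * d := by
    rcases le_or_gt 0 b with hb | hb
    · calc a * e ≤ b * d * e := mul_le_mul_of_nonneg_right had he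
        _ = b * e * d := by ring
        _ ≤ m * d := mul_le_mul_of_nonneg_right hbe hd.le
    · have ha : a < 0 := had.trans_lt (mul_neg_of_neg_of_pos hb hd)
      calc a * e ≤ 0 := mul_nonpos_of_nonpos_of_nonneg ha.le he
        _ ≤ m * d := by positivity
  rw [div_le_div_iff₀ hd (by positivity)]
  linarith

theorem Finset.sum_Icc_one_add_sum_Ioc {M : Type*} [AddCommMonoid M] (f : ℕ → M) {j k : ℕ}
    (hjk : j ≤ k) : ∑ i ∈ Icc 1 j, f i + ∑ i ∈ Ioc j k, f i = ∑ i ∈ Icc 1 k, f i := by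
  simpa only [← Icc_add_one_left_eq_Ioc, zero_add] using sum_Ioc_consecutive f (Nat.zero_le j) hjk

theorem Finset.mul_sum_one_div_le_card {ι α : Type*} [Field α] [LinearOrder α]
    [IsStrictOrderedRing α] (s : Finset ι) {f : ι → α} {b : α} (hf : ∀ i ∈ s, 0 < f i)
    (hb : ∀ i ∈ s, b ≤ f i) : b * ∑ i ∈ s, 1 / f i ≤ #s := by
  rw [mul_sum]
  calc ∑ i ∈ s, b * (1 / f i) ≤ ∑ _i ∈ s, (1 : α) :=
        sum_le_sum fun i hi => by rw [mul_one_div]; exact (div_le_one (hf i hi)).mpr (hb i hi)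
    _ = #s := by simp

theorem equilibrium_time_slow_worker_ineq_general (n : ℕ) (τ : ℕ → ℝ)
    (hpos : ∀ i ∈ Finset.Icc 1 n, 0 < τ i)
    (jB k : ℕ) (hjB : 1 ≤ jB) (hjBk : jB < k) (hk : k ≤ n)
    (S : ℝ) (B : ℝ)
    (hB : (S + jB) / (∑ i ∈ Finset.Icc 1 jB, 1 / τ i) ≤ B)
    (hslow : ∀ i, jB < i → i ≤ k → B ≤ τ i) :
    (S + jB) / (∑ i ∈ Finset.Icc 1 jB, 1 / τ i)
      ≤ (S + k) / (∑ i ∈ Finset.Icc 1 k, 1 / τ i) := by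
  have hτ : ∀ i, 1 ≤ i → i ≤ k → 0 < τ i := fun i h1 h2 =>
    hpos i (mem_Icc.2 ⟨h1, h2.trans hk⟩)
  have hfast : 0 < ∑ i ∈ Icc 1 jB, 1 / τ i :=
    sum_pos (fun i hi => one_div_pos.2 (hτ i (mem_Icc.1 hi).1 ((mem_Icc.1 hi).2.trans hjBk.le)))
      ⟨jB, mem_Icc.2 ⟨hjB, le_rfl⟩⟩
  have hτ_slow : ∀ i ∈ Ioc jB k, 0 < τ i := fun i hi =>
    hτ i (hjB.trans (mem_Ioc.1 hi).1.le) (mem_Ioc.1 hi).2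
  have hslow_nonneg : 0 ≤ ∑ i ∈ Ioc jB k, 1 / τ i :=
    sum_nonneg fun i hi => (one_div_pos.2 (hτ_slow i hi)).le
  have hslow_le : B * ∑ i ∈ Ioc jB k, 1 / τ i ≤ ((k - jB : ℕ) : ℝ) := by
    simpa only [Nat.card_Ioc] using
      mul_sum_one_div_le_card _ hτ_slow fun i hi => hslow i (mem_Ioc.1 hi).1 (mem_Ioc.1 hi).2
  have hnum : (S + jB) + ((k - jB : ℕ) : ℝ) = S + k := by
    rw [Nat.cast_sub hjBk.le]; ring
  rw [← sum_Icc_one_add_sum_Ioc _ hjBk.le, ← hnum]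
  exact div_le_add_div_add_of_mul_le hfast hslow_nonneg (Nat.cast_nonneg _) hB hslow_le

theorem equilibrium_time_slow_worker_ineq (n : ℕ) (τ : ℕ → ℝ)
    (hpos : ∀ i ∈ Finset.Icc 1 n, 0 < τ i)
    (jB k : ℕ) (hjB : 1 ≤ jB) (hjBk : jB < k) (hk : k ≤ n)
    (S : ℝ) (hS : 0 ≤ S) (B : ℝ)
    (hB : (S + jB) / (∑ i ∈ Finset.Icc 1 jB, 1 / τ i) ≤ B)
    (hslow : ∀ i, jB < i → i ≤ k → B ≤ τ i) :
    (S + jB) / (∑ i ∈ Finset.Icc 1 jB, 1 / τ i)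
      ≤ (S + k) / (∑ i ∈ Finset.Icc 1 k, 1 / τ i) :=
  equilibrium_time_slow_worker_ineq_general n τ hpos jB k hjB hjBk hk S B hB hslow
end

section
/- Let m ≥ 1, n ≥ 1 with √m ≥ n, and let 0 < τ_1 ≤ ... ≤ τ_n. Then t*(√m) ≤ (2/√m) t*(m), where t*(S) = min_{j∈[n]} (∑_{i=1}^j 1/τ_i)^{-1} (S + j). -/
/-! At a minimiser `j` of `t*(m)`, the denominators of `t*(√m)` and `t*(m)` agree, and
`√m + j ≤ 2√m ≤ (2/√m)(m + j)` because `j ≤ n ≤ √m`. -/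

theorem Finset.inf'_le_mul_inf' {ι : Type*} {s : Finset ι} (hs : s.Nonempty) {f g : ι → ℝ}
    {c : ℝ} (hfg : ∀ j ∈ s, f j ≤ c * g j) : s.inf' hs f ≤ c * s.inf' hs g := by
  obtain ⟨j, hj, hg⟩ := s.exists_mem_eq_inf' hs g
  rw [hg]
  exact (s.inf'_le f hj).trans (hfg j hj)

theorem add_le_two_div_mul_sq_add {s x : ℝ} (hs : 0 < s) (hx : 0 ≤ x) (hxs : x ≤ s) :
    s + x ≤ 2 / s * (s ^ 2 + x) := by
  rw [div_mul_eq_mul_div, le_div_iff₀ hs]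
  nlinarith

theorem sum_Icc_one_div_pos {τ : ℕ → ℝ} {j : ℕ} (hj : 1 ≤ j)
    (hpos : ∀ i ∈ Finset.Icc 1 j, 0 < τ i) : 0 < ∑ i ∈ Finset.Icc 1 j, 1 / τ i :=
  Finset.sum_pos (fun i hi => one_div_pos.mpr (hpos i hi)) (Finset.nonempty_Icc.mpr hj)

theorem equilibrium_time_sqrt_le_general (m n : ℕ) (hn : 1 ≤ n)
    (hsqrt : (n : ℝ) ≤ Real.sqrt m) (τ : ℕ → ℝ)
    (hpos : ∀ i ∈ Finset.Icc 1 n, 0 < τ i)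
    (tstar : ℝ → ℝ)
    (htstar : ∀ S : ℝ, tstar S = (Finset.Icc 1 n).inf' (Finset.nonempty_Icc.mpr hn)
        (fun j => (S + j) / ∑ i ∈ Finset.Icc 1 j, 1 / τ i)) :
    tstar (Real.sqrt m) ≤ (2 / Real.sqrt m) * tstar m := by
  rw [htstar, htstar]
  refine Finset.inf'_le_mul_inf' _ fun j hj => ?_
  obtain ⟨h1j, hjn⟩ := Finset.mem_Icc.mp hj
  have hden : 0 < ∑ i ∈ Finset.Icc 1 j, 1 / τ i :=
    sum_Icc_one_div_pos h1j fun i hi =>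
      hpos i (Finset.Icc_subset_Icc_right hjn hi)
  have hsqrt_pos : 0 < Real.sqrt m := lt_of_lt_of_le (by exact_mod_cast hn) hsqrt
  have hjsqrt : (j : ℝ) ≤ Real.sqrt m := le_trans (by exact_mod_cast hjn) hsqrt
  have hnum := add_le_two_div_mul_sq_add hsqrt_pos (Nat.cast_nonneg j) hjsqrt
  rw [Real.sq_sqrt (Nat.cast_nonneg m)] at hnum
  rw [mul_div_assoc']
  exact div_le_div_of_nonneg_right hnum hden.le

theorem equilibrium_time_sqrt_le (m n : ℕ) (hm : 1 ≤ m) (hn : 1 ≤ n)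
    (hsqrt : (n : ℝ) ≤ Real.sqrt m) (τ : ℕ → ℝ)
    (hpos : ∀ i ∈ Finset.Icc 1 n, 0 < τ i)
    (hmono : ∀ i j, 1 ≤ i → i ≤ j → j ≤ n → τ i ≤ τ j)
    (tstar : ℝ → ℝ)
    (htstar : ∀ S : ℝ, tstar S = (Finset.Icc 1 n).inf' (Finset.nonempty_Icc.mpr hn)
        (fun j => (S + j) / ∑ i ∈ Finset.Icc 1 j, 1 / τ i)) :
    tstar (Real.sqrt m) ≤ (2 / Real.sqrt m) * tstar m :=
  equilibrium_time_sqrt_le_general m n hn hsqrt τ hpos tstar htstar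
end
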